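/- arXiv:1103.5429 — 2 statements merged into one kernel-verified Lean document; each statement's English description precedes it below -/
import Mathlib

section
/- Let f : ℝ^{n+1} → ℝ be a smooth function with compact support in an open set Ω, and δ : Ω → ℝ a locally Lipschitz function with |∇δ| = 1 almost everywhere in Ω and δ > 0 on Ω. Then ∫_Ω |∇f|² dx − (1/4)∫_Ω f²/δ² dx = ∫_Ω |∇f − (f/(2δ))∇δ|² dx + ∫_Ω ∇δ·∇(f²/(2δ)) dx. -/
open MeasureTheory

set_option maxHeartbeats 1000000 in
open InnerProductSpace in
theorem stmt_15 (n : ℕ)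
    (Ω : Set (EuclideanSpace ℝ (Fin (n + 1)))) (hΩ : IsOpen Ω)
    (f : EuclideanSpace ℝ (Fin (n + 1)) → ℝ)
    (hf : ContDiff ℝ (⊤ : ℕ∞) f) (hfc : HasCompactSupport f) (hfsupp : tsupport f ⊆ Ω)
    (δ : EuclideanSpace ℝ (Fin (n + 1)) → ℝ)
    (hδpos : ∀ x ∈ Ω, 0 < δ x)
    (hδlip : ∀ x ∈ Ω, ∃ U ∈ nhds x, ∃ K, LipschitzOnWith K δ U)
    (δ' : EuclideanSpace ℝ (Fin (n + 1)) → EuclideanSpace ℝ (Fin (n + 1)))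
    (hδ' : ∀ᵐ x ∂(volume.restrict Ω), HasGradientAt δ (δ' x) x ∧ ‖δ' x‖ = 1)
    (g' : EuclideanSpace ℝ (Fin (n + 1)) → EuclideanSpace ℝ (Fin (n + 1)))
    (hg' : ∀ᵐ x ∂(volume.restrict Ω),
      HasGradientAt (fun y => (f y) ^ 2 / (2 * δ y)) (g' x) x) :
    (∫ x in Ω, ‖gradient f x‖ ^ 2) - (1 / 4) * ∫ x in Ω, (f x) ^ 2 / (δ x) ^ 2
      = (∫ x in Ω, ‖gradient f x - (f x / (2 * δ x)) • δ' x‖ ^ 2)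
        + ∫ x in Ω, (inner ℝ (δ' x) (g' x) : ℝ) := by
  classical
  set K : Set (EuclideanSpace ℝ (Fin (n + 1))) := tsupport f with hKdef
  have hKc : IsCompact K := hfc
  have hKmeas : MeasurableSet K := hKc.isClosed.measurableSet
  -- continuity of δ on Ω
  have hδcontAt : ∀ x ∈ Ω, ContinuousAt δ x := by
    intro x hx
    obtain ⟨U, hU, L, hL⟩ := hδlip x hx
    exact (hL.continuousOn).continuousAt hU
  have hδcont : ContinuousOn δ Ω := fun x hx => (hδcontAt x hx).continuousWithinAt
  -- lower bound for δ on K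
  obtain ⟨c, hc0, hcK⟩ : ∃ c : ℝ, 0 < c ∧ ∀ x ∈ K, c ≤ δ x := by
    rcases K.eq_empty_or_nonempty with h | h
    · exact ⟨1, one_pos, by simp [h]⟩
    · obtain ⟨x₀, hx₀, hmin⟩ := hKc.exists_isMinOn h (hδcont.mono hfsupp)
      exact ⟨δ x₀, hδpos x₀ (hfsupp hx₀), fun x hx => hmin hx⟩
  -- bounds for f and its gradient
  obtain ⟨Mf, hMf⟩ := hfc.exists_bound_of_continuous hf.continuous
  have hfdiff : Differentiable ℝ f := hf.differentiable (by simp)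
  have hgradf_cont : Continuous (gradient f) := by
    have h1 : Continuous (fderiv ℝ f) := hf.continuous_fderiv (by simp)
    exact (toDual ℝ (EuclideanSpace ℝ (Fin (n + 1)))).symm.continuous.comp h1
  have hgradf_supp : ∀ x, x ∉ K → gradient f x = 0 := by
    intro x hx
    have : fderiv ℝ f x = 0 := by
      by_contra h
      exact hx (support_fderiv_subset ℝ (by simpa [Function.support] using h))
    simp [gradient, this]
  obtain ⟨Mg, hMg⟩ : ∃ C : ℝ, ∀ x, ‖gradient f x‖ ≤ C := by
    have : HasCompactSupport (gradient f) := by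
      apply hfc.mono'
      intro x hx
      simp only [Function.mem_support] at hx
      by_contra h
      exact hx (hgradf_supp x h)
    exact this.exists_bound_of_continuous hgradf_cont
  have hMf0 : 0 ≤ Mf := le_trans (norm_nonneg _) (hMf 0)
  have hMg0 : 0 ≤ Mg := le_trans (norm_nonneg _) (hMg 0)
  -- the set of good points
  have hmain : ∀ᵐ x ∂(volume.restrict Ω),
      x ∈ Ω ∧ ‖δ' x‖ = 1 ∧
      g' x = (f x / δ x) • gradient f x - (f x ^ 2 / (2 * (δ x) ^ 2)) • δ' x := by
    filter_upwards [hδ', hg', ae_restrict_mem hΩ.measurableSet] with x hx1 hx2 hxΩ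
    obtain ⟨hgd, hnorm⟩ := hx1
    refine ⟨hxΩ, hnorm, ?_⟩
    have hd : 0 < δ x := hδpos x hxΩ
    have h2d : (2 * δ x) ≠ 0 := by positivity
    have hfd : HasFDerivAt f (fderiv ℝ f x) x := (hfdiff x).hasFDerivAt
    have hDδ : HasFDerivAt δ ((toDual ℝ (EuclideanSpace ℝ (Fin (n + 1)))) (δ' x)) x := hgd.hasFDerivAt
    have hsq : HasFDerivAt (fun y => f y ^ 2) ((2 * f x) • fderiv ℝ f x) x := by
      have := hfd.mul hfd
      exact (this.congr_fderiv (by module)).congr_of_eventuallyEq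
        (Filter.Eventually.of_forall fun y => by simp [sq])
    have h2δ : HasFDerivAt (fun y => 2 * δ y) ((2 : ℝ) • (toDual ℝ (EuclideanSpace ℝ (Fin (n + 1)))) (δ' x)) x :=
      hDδ.const_mul 2
    have hinv : HasDerivAt (fun y : ℝ => y⁻¹) (-((2 * δ x) ^ 2)⁻¹) (2 * δ x) :=
      hasDerivAt_inv h2d
    have hinvc : HasFDerivAt (fun y => (2 * δ y)⁻¹)
        ((-((2 * δ x) ^ 2)⁻¹) • ((2 : ℝ) • (toDual ℝ (EuclideanSpace ℝ (Fin (n + 1)))) (δ' x))) x :=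
      hinv.comp_hasFDerivAt x h2δ
    have hφ : HasFDerivAt (fun y => f y ^ 2 / (2 * δ y))
        ((f x ^ 2) • ((-((2 * δ x) ^ 2)⁻¹) • ((2 : ℝ) • (toDual ℝ (EuclideanSpace ℝ (Fin (n + 1)))) (δ' x)))
          + ((2 * δ x)⁻¹) • ((2 * f x) • fderiv ℝ f x)) x := by
      have := hsq.mul hinvc
      exact this.congr_of_eventuallyEq (Filter.Eventually.of_forall fun y => by simp [div_eq_mul_inv])
    have htarget : HasGradientAt (fun y => f y ^ 2 / (2 * δ y))
        ((f x / δ x) • gradient f x - (f x ^ 2 / (2 * (δ x) ^ 2)) • δ' x) x := by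
      rw [hasGradientAt_iff_hasFDerivAt]
      refine hφ.congr_fderiv (Eq.symm ?_)
      have hgf : (toDual ℝ (EuclideanSpace ℝ (Fin (n + 1)))) (gradient f x) = fderiv ℝ f x :=
        (toDual ℝ (EuclideanSpace ℝ (Fin (n + 1)))).apply_symm_apply (fderiv ℝ f x)
      rw [map_sub]
      rw [show ((toDual ℝ (EuclideanSpace ℝ (Fin (n + 1)))) ((f x / δ x) • gradient f x)) = (f x / δ x) • (toDual ℝ (EuclideanSpace ℝ (Fin (n + 1)))) (gradient f x) by
        simp]
      rw [show ((toDual ℝ (EuclideanSpace ℝ (Fin (n + 1)))) ((f x ^ 2 / (2 * (δ x) ^ 2)) • δ' x)) = (f x ^ 2 / (2 * (δ x) ^ 2)) • (toDual ℝ (EuclideanSpace ℝ (Fin (n + 1)))) (δ' x) by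
        simp]
      rw [hgf]
      match_scalars
      · field_simp
      · field_simp
    exact hx2.unique htarget
  -- key pointwise identity
  have hd2 : ∀ᵐ x ∂(volume.restrict Ω),
      ‖gradient f x - (f x / (2 * δ x)) • δ' x‖ ^ 2 + (inner ℝ (δ' x) (g' x) : ℝ)
        = ‖gradient f x‖ ^ 2 - 1 / 4 * (f x ^ 2 / (δ x) ^ 2) := by
    filter_upwards [hmain] with x ⟨hxΩ, hnorm, hgval⟩
    have hd : 0 < δ x := hδpos x hxΩ
    rw [hgval, inner_sub_right, real_inner_smul_right, real_inner_smul_right,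
      real_inner_self_eq_norm_sq, hnorm, norm_sub_sq_real, real_inner_smul_right,
      norm_smul, hnorm, real_inner_comm (gradient f x) (δ' x)]
    rw [Real.norm_eq_abs, mul_one, sq_abs, one_pow]
    have h2 : δ x ≠ 0 := hd.ne'
    field_simp
    ring
  -- integrability
  have hWint : ∀ R : ℝ, Integrable (K.indicator (fun _ => R)) (volume.restrict Ω) := by
    intro R
    refine (IntegrableOn.integrable_indicator ?_ hKmeas).integrableOn
    exact integrableOn_const hKc.measure_lt_top.ne
  have hgradδ_meas : Measurable (gradient δ) := by
    have h1 : Measurable (fderiv ℝ δ) := measurable_fderiv ℝ δ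
    exact (toDual ℝ (EuclideanSpace ℝ (Fin (n + 1)))).symm.continuous.measurable.comp h1
  have hδ'ae : δ' =ᵐ[volume.restrict Ω] gradient δ := by
    filter_upwards [hδ'] with x hx using (hx.1.gradient).symm
  have hg'ae : g' =ᵐ[volume.restrict Ω] gradient (fun y => f y ^ 2 / (2 * δ y)) := by
    filter_upwards [hg'] with x hx using (hx.gradient).symm
  have hgradφ_meas : Measurable (gradient (fun y => f y ^ 2 / (2 * δ y))) := by
    have h1 : Measurable (fderiv ℝ (fun y => f y ^ 2 / (2 * δ y))) :=
      measurable_fderiv ℝ (fun y => f y ^ 2 / (2 * δ y))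
    exact (toDual ℝ (EuclideanSpace ℝ (Fin (n + 1)))).symm.continuous.measurable.comp h1
  -- integrability of A
  have hintA : Integrable (fun x => ‖gradient f x‖ ^ 2) (volume.restrict Ω) := by
    refine (Continuous.integrable_of_hasCompactSupport (by fun_prop) ?_).integrableOn
    apply hfc.mono'
    intro x hx
    simp only [Function.mem_support] at hx
    by_contra h
    have := hgradf_supp x h
    simp [this] at hx
  -- integrability of B
  have hBaesm : AEStronglyMeasurable (fun x => f x ^ 2 / (δ x) ^ 2) (volume.restrict Ω) := by
    apply ContinuousOn.aestronglyMeasurable ?_ hΩ.measurableSet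
    exact ContinuousOn.div (hf.continuous.pow 2).continuousOn (hδcont.pow 2)
      (fun x hx => pow_ne_zero _ (hδpos x hx).ne')
  have hintB : Integrable (fun x => f x ^ 2 / (δ x) ^ 2) (volume.restrict Ω) := by
    refine Integrable.mono' (hWint (Mf ^ 2 / c ^ 2)) hBaesm ?_
    refine Filter.Eventually.of_forall fun x => ?_
    by_cases hx : x ∈ K
    · rw [Set.indicator_of_mem hx]
      have h1 : c ≤ δ x := hcK x hx
      have h2 : ‖f x‖ ≤ Mf := hMf x
      rw [Real.norm_eq_abs, abs_div, abs_pow, abs_pow]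
      apply div_le_div₀ (by positivity) ?_ (by positivity) ?_
      · exact pow_le_pow_left₀ (abs_nonneg _) (by simpa using h2) 2
      · exact pow_le_pow_left₀ hc0.le (by rwa [abs_of_pos (lt_of_lt_of_le hc0 h1)]) 2
    · rw [Set.indicator_of_notMem hx]
      have : f x = 0 := image_eq_zero_of_notMem_tsupport hx
      simp [this]
  -- integrability of C
  have hintC : Integrable (fun x => ‖gradient f x - (f x / (2 * δ x)) • δ' x‖ ^ 2)
      (volume.restrict Ω) := by
    have haesm : AEStronglyMeasurable
        (fun x => ‖gradient f x - (f x / (2 * δ x)) • δ' x‖ ^ 2) (volume.restrict Ω) := by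
      have h1 : AEStronglyMeasurable (fun x => f x / (2 * δ x)) (volume.restrict Ω) := by
        apply ContinuousOn.aestronglyMeasurable ?_ hΩ.measurableSet
        exact ContinuousOn.div hf.continuous.continuousOn (continuousOn_const.mul hδcont)
          (fun x hx => by have := hδpos x hx; positivity)
      have h2 : AEStronglyMeasurable (fun x => gradient f x - (f x / (2 * δ x)) • gradient δ x)
          (volume.restrict Ω) :=
        (hgradf_cont.aestronglyMeasurable).sub (h1.smul hgradδ_meas.aestronglyMeasurable)
      refine AEStronglyMeasurable.congr ((h2.norm).pow 2) ?_
      filter_upwards [hδ'ae] with x hx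
      rw [hx]
      rfl
    refine Integrable.mono' (hWint ((Mg + Mf / (2 * c)) ^ 2)) haesm ?_
    filter_upwards [hmain] with x ⟨hxΩ, hnorm, _⟩
    by_cases hx : x ∈ K
    · rw [Set.indicator_of_mem hx]
      have h1 : c ≤ δ x := hcK x hx
      have hd : 0 < δ x := lt_of_lt_of_le hc0 h1
      have hb : ‖gradient f x - (f x / (2 * δ x)) • δ' x‖ ≤ Mg + Mf / (2 * c) := by
        refine le_trans (norm_sub_le _ _) ?_
        apply add_le_add (hMg x)
        rw [norm_smul, hnorm, mul_one, Real.norm_eq_abs, abs_div]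
        rw [abs_of_pos (by positivity : (0:ℝ) < 2 * δ x)]
        apply div_le_div₀ hMf0 (by simpa using hMf x) (by positivity)
        nlinarith
      rw [Real.norm_eq_abs, abs_of_nonneg (by positivity)]
      exact pow_le_pow_left₀ (norm_nonneg _) hb 2
    · rw [Set.indicator_of_notMem hx]
      have h0 : f x = 0 := image_eq_zero_of_notMem_tsupport hx
      have h0' : gradient f x = 0 := hgradf_supp x hx
      simp [h0, h0']
  -- integrability of D
  have hintD : Integrable (fun x => (inner ℝ (δ' x) (g' x) : ℝ)) (volume.restrict Ω) := by
    have haesm : AEStronglyMeasurable (fun x => (inner ℝ (δ' x) (g' x) : ℝ))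
        (volume.restrict Ω) := by
      have h2 : AEStronglyMeasurable
          (fun x => (inner ℝ (gradient δ x) (gradient (fun y => f y ^ 2 / (2 * δ y)) x) : ℝ))
          (volume.restrict Ω) :=
        (hgradδ_meas.inner hgradφ_meas).aestronglyMeasurable
      refine h2.congr ?_
      filter_upwards [hδ'ae, hg'ae] with x h1 h2
      rw [h1, h2]
    refine Integrable.mono' (hWint (Mf / c * Mg + Mf ^ 2 / (2 * c ^ 2))) haesm ?_
    filter_upwards [hmain] with x ⟨hxΩ, hnorm, hgval⟩
    by_cases hx : x ∈ K
    · rw [Set.indicator_of_mem hx]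
      have h1 : c ≤ δ x := hcK x hx
      have hd : 0 < δ x := lt_of_lt_of_le hc0 h1
      have habs : ‖(inner ℝ (δ' x) (g' x) : ℝ)‖ ≤ ‖g' x‖ := by
        rw [Real.norm_eq_abs]
        calc |(inner ℝ (δ' x) (g' x) : ℝ)| ≤ ‖δ' x‖ * ‖g' x‖ := abs_real_inner_le_norm _ _
          _ = ‖g' x‖ := by rw [hnorm, one_mul]
      refine le_trans habs ?_
      rw [hgval]
      refine le_trans (norm_sub_le _ _) ?_
      apply add_le_add
      · rw [norm_smul, Real.norm_eq_abs, abs_div, abs_of_pos hd]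
        have : |f x| / δ x ≤ Mf / c :=
          div_le_div₀ hMf0 (by simpa using hMf x) hc0 h1
        calc |f x| / δ x * ‖gradient f x‖ ≤ Mf / c * Mg := by
              apply mul_le_mul this (hMg x) (norm_nonneg _) (by positivity)
          _ = Mf / c * Mg := rfl
      · rw [norm_smul, hnorm, mul_one, Real.norm_eq_abs, abs_div]
        rw [abs_of_pos (by positivity : (0:ℝ) < 2 * (δ x) ^ 2), abs_pow]
        apply div_le_div₀ (by positivity) ?_ (by positivity) ?_
        · exact pow_le_pow_left₀ (abs_nonneg _) (by simpa using hMf x) 2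
        · have : c ^ 2 ≤ (δ x) ^ 2 := pow_le_pow_left₀ hc0.le h1 2
          linarith
    · rw [Set.indicator_of_notMem hx]
      have h0 : f x = 0 := image_eq_zero_of_notMem_tsupport hx
      have h0' : gradient f x = 0 := hgradf_supp x hx
      rw [hgval, h0, h0']
      simp
  -- conclude
  rw [show (1 / 4 : ℝ) * ∫ x in Ω, f x ^ 2 / (δ x) ^ 2
      = ∫ x in Ω, 1 / 4 * (f x ^ 2 / (δ x) ^ 2) from (integral_const_mul _ _).symm]
  rw [← integral_sub hintA (hintB.const_mul (1 / 4)), ← integral_add hintC hintD]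
  exact (integral_congr_ae hd2).symm
end

section
/- Let p > 1, f : ℝ^{n+1} → ℝ smooth with compact support in an open set Ω, and δ : Ω → ℝ locally Lipschitz with |∇δ| = 1 a.e. and δ > 0 on Ω. Then ∫_Ω |∇f|^p dx − ((p−1)/p)^p ∫_Ω |f|^p/δ^p dx ≥ ((p−1)/p)^{p−1} ∫_Ω ∇δ·∇(|f|^p/δ^{p−1}) dx. -/
open MeasureTheory

lemma scalar_key' {p : ℝ} (hp : 1 < p) {A b J : ℝ} (hA : 0 ≤ A) (hb : 0 ≤ b) (hJ : J ≤ A * b) :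
    b ^ p + p * b ^ (p - 2) * (J - b ^ 2) ≤ A ^ p := by
  have hp0 : 0 < p := by linarith
  rcases eq_or_lt_of_le hb with hb0 | hb
  · rw [← hb0]
    have h1 : (0:ℝ) ^ p = 0 := Real.zero_rpow hp0.ne'
    have h2 : J ≤ 0 := by simpa [← hb0] using hJ
    have h3 : p * (0:ℝ) ^ (p - 2) * (J - 0 ^ 2) ≤ 0 := by
      apply mul_nonpos_of_nonneg_of_nonpos
      · positivity
      · simpa using h2
    have h4 := Real.rpow_nonneg hA p
    rw [h1, zero_add]
    linarith
  · set q : ℝ := p / (p - 1) with hq_def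
    have hp1 : 0 < p - 1 := by linarith
    have hq : 0 < q := by positivity
    have hpq : p.HolderConjugate q := Real.HolderConjugate.conjExponent hp
    have young := Real.young_inequality_of_nonneg hA (Real.rpow_nonneg hb.le (p-1)) hpq
    have hbq : (b ^ (p-1)) ^ q = b ^ p := by
      rw [← Real.rpow_mul hb.le]
      rw [hq_def]
      field_simp
    rw [hbq] at young
    have h2 : b ^ (p-2) * b = b ^ (p-1) := by
      rw [← Real.rpow_add_one hb.ne']
      congr 1
      ring
    have h3 : b ^ (p-2) * b ^ 2 = b ^ p := by
      have : b ^ (2:ℕ) = b * b := sq b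
      rw [this, ← mul_assoc, h2, ← Real.rpow_add_one hb.ne']
      congr 1
      ring
    have h4 : (0:ℝ) ≤ b ^ (p-2) := Real.rpow_nonneg hb.le _
    have h5 : b ^ (p-2) * J ≤ A * b ^ (p-1) := by
      calc b ^ (p-2) * J ≤ b ^ (p-2) * (A * b) := mul_le_mul_of_nonneg_left hJ h4
        _ = A * (b ^ (p-2) * b) := by ring
        _ = A * b ^ (p-1) := by rw [h2]
    have hpqr : p / q = p - 1 := by
      rw [hq_def]; field_simp
    have e2 : p * (A * b ^ (p-1)) ≤ A ^ p + (p-1) * b ^ p := by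
      have := mul_le_mul_of_nonneg_left young hp0.le
      calc p * (A * b ^ (p-1)) ≤ p * (A ^ p / p + b ^ p / q) := this
        _ = A ^ p + (p / q) * b ^ p := by field_simp
        _ = A ^ p + (p-1) * b ^ p := by rw [hpqr]
    calc b ^ p + p * b ^ (p-2) * (J - b ^ 2)
        = b ^ p + p * (b ^ (p-2) * J) - p * (b ^ (p-2) * b ^ 2) := by ring
      _ = b ^ p + p * (b ^ (p-2) * J) - p * b ^ p := by rw [h3]
      _ ≤ b ^ p + p * (A * b ^ (p-1)) - p * b ^ p := by
          have := mul_le_mul_of_nonneg_left h5 hp0.le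
          linarith
      _ ≤ b ^ p + (A ^ p + (p-1) * b ^ p) - p * b ^ p := by linarith
      _ = A ^ p := by ring

lemma pointwise_scalar' {p : ℝ} (hp : 1 < p) {F a A I : ℝ} (ha : 0 < a) (hA : 0 ≤ A)
    (hI : |I| ≤ A) :
    ((p-1)/p) ^ (p-1) * (p * |F| ^ (p-2) * F * I / a ^ (p-1) - (p-1) * |F| ^ p / a ^ p)
      ≤ A ^ p - ((p-1)/p) ^ p * (|F| ^ p / a ^ p) := by
  have hp0 : 0 < p := by linarith
  have hp1 : 0 < p - 1 := by linarith
  set c : ℝ := (p-1)/p with hc_def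
  have hc : 0 < c := by positivity
  rcases eq_or_ne F 0 with rfl | hF
  · have h0 : |(0:ℝ)| ^ p = 0 := by
      rw [abs_zero, Real.zero_rpow hp0.ne']
    rw [h0]
    have h1 : p * |(0:ℝ)| ^ (p-2) * 0 * I / a ^ (p-1) - (p-1) * 0 / a ^ p = 0 := by ring
    rw [h1, mul_zero, zero_div, mul_zero, sub_zero]
    exact Real.rpow_nonneg hA p
  · have hFa : 0 < |F| := abs_pos.mpr hF
    set b : ℝ := c * (|F| / a) with hb_def
    have hb : 0 ≤ b := by positivity
    set J : ℝ := c * (F / a) * I with hJ_def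
    have hJ : J ≤ A * b := by
      calc J ≤ |J| := le_abs_self J
        _ = c * (|F| / a) * |I| := by
            rw [hJ_def, abs_mul, abs_mul, abs_of_pos hc, abs_div, abs_of_pos ha]
        _ ≤ c * (|F| / a) * A := mul_le_mul_of_nonneg_left hI (by positivity)
        _ = A * b := by rw [hb_def]; ring
    have key := scalar_key' hp hA hb hJ
    have star : c ^ (p-1) * (p * |F| ^ (p-2) * F * I / a ^ (p-1) - (p-1) * |F| ^ p / a ^ p)
        + c ^ p * (|F| ^ p / a ^ p) = b ^ p + p * b ^ (p-2) * (J - b ^ 2) := by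
      have e1 : b ^ p = c ^ p * (|F| ^ p / a ^ p) := by
        rw [hb_def, Real.mul_rpow hc.le (by positivity), Real.div_rpow hFa.le ha.le]
      have e2 : b ^ (p-2) = c ^ (p-2) * (|F| ^ (p-2) / a ^ (p-2)) := by
        rw [hb_def, Real.mul_rpow hc.le (by positivity), Real.div_rpow hFa.le ha.le]
      have c1 : c ^ (p-1) = c ^ p / c := by
        rw [Real.rpow_sub hc, Real.rpow_one]
      have c2 : c ^ (p-2) = c ^ p / c ^ 2 := by
        rw [Real.rpow_sub hc, Real.rpow_two]
      have a1 : a ^ (p-1) = a ^ p / a := by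
        rw [Real.rpow_sub ha, Real.rpow_one]
      have a2 : a ^ (p-2) = a ^ p / a ^ 2 := by
        rw [Real.rpow_sub ha, Real.rpow_two]
      have f1 : |F| ^ (p-2) = |F| ^ p / |F| ^ 2 := by
        rw [Real.rpow_sub hFa, Real.rpow_two]
      have hap : (0:ℝ) < a ^ p := Real.rpow_pos_of_pos ha p
      have hFp : (0:ℝ) < |F| ^ p := Real.rpow_pos_of_pos hFa p
      have hcp : (0:ℝ) < c ^ p := Real.rpow_pos_of_pos hc p
      have hsq : |F| ^ 2 = F ^ 2 := sq_abs F
      rw [e1, e2, c1, c2, a1, a2, f1, hJ_def, hb_def, hc_def]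
      field_simp
      simp only [mul_pow, sq_abs]
      ring
    linarith [key, star]

lemma abs_rpow_step {p : ℝ} (hp : 1 < p) (F : ℝ) : |F| ^ (p-2) * |F| = |F| ^ (p-1) := by
  rcases eq_or_ne F 0 with rfl | hF
  · simp [Real.zero_rpow (by intro h; linarith [sub_eq_zero.mp h] : p - 1 ≠ 0)]
  · rw [← Real.rpow_add_one (abs_ne_zero.mpr hF)]
    congr 1
    ring

theorem stmt_16 (n : ℕ) (p : ℝ) (hp : 1 < p)
    (Ω : Set (EuclideanSpace ℝ (Fin (n + 1)))) (hΩ : IsOpen Ω)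
    (f : EuclideanSpace ℝ (Fin (n + 1)) → ℝ)
    (hf : ContDiff ℝ (⊤ : ℕ∞) f) (hfc : HasCompactSupport f) (hfsupp : tsupport f ⊆ Ω)
    (δ : EuclideanSpace ℝ (Fin (n + 1)) → ℝ)
    (hδpos : ∀ x ∈ Ω, 0 < δ x)
    (hδlip : ∀ x ∈ Ω, ∃ U ∈ nhds x, ∃ K, LipschitzOnWith K δ U)
    (δ' : EuclideanSpace ℝ (Fin (n + 1)) → EuclideanSpace ℝ (Fin (n + 1)))
    (hδ' : ∀ᵐ x ∂(volume.restrict Ω), HasGradientAt δ (δ' x) x ∧ ‖δ' x‖ = 1)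
    (g' : EuclideanSpace ℝ (Fin (n + 1)) → EuclideanSpace ℝ (Fin (n + 1)))
    (hg' : ∀ᵐ x ∂(volume.restrict Ω),
      HasGradientAt (fun y => |f y| ^ p / (δ y) ^ (p - 1)) (g' x) x) :
    ((p - 1) / p) ^ (p - 1) * ∫ x in Ω, (inner ℝ (δ' x) (g' x) : ℝ)
      ≤ (∫ x in Ω, ‖gradient f x‖ ^ p)
        - ((p - 1) / p) ^ p * ∫ x in Ω, |f x| ^ p / (δ x) ^ p := by
  have hp0 : 0 < p := by linarith
  have hp1 : 0 < p - 1 := by linarith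
  have hfd : Differentiable ℝ f := hf.differentiable (by simp)
  rcases (tsupport f).eq_empty_or_nonempty with hSe | hSne
  · -- f is identically zero
    have hf0 : ∀ x, f x = 0 := fun x =>
      image_eq_zero_of_notMem_tsupport (by rw [hSe]; exact Set.notMem_empty x)
    have hgrad0 : ∀ x, gradient f x = 0 := by
      have hfz : f = fun _ => (0:ℝ) := funext hf0
      intro x
      rw [hfz, gradient_fun_const]
    have hp0 : 0 < p := by linarith
    have hI1 : (∫ x in Ω, ‖gradient f x‖ ^ p) = 0 := by
      have h : ∀ x, ‖gradient f x‖ ^ p = 0 := fun x => by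
        rw [hgrad0, norm_zero, Real.zero_rpow hp0.ne']
      simp only [h, integral_zero]
    have hI2 : (∫ x in Ω, |f x| ^ p / (δ x) ^ p) = 0 := by
      have h : ∀ x, |f x| ^ p / (δ x) ^ p = 0 := fun x => by
        rw [hf0, abs_zero, Real.zero_rpow hp0.ne', zero_div]
      simp only [h, integral_zero]
    have hI3 : (∫ x in Ω, (inner ℝ (δ' x) (g' x) : ℝ)) = 0 := by
      have hg0 : ∀ᵐ x ∂(volume.restrict Ω), (inner ℝ (δ' x) (g' x) : ℝ) = 0 := by
        filter_upwards [hg'] with x hgx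
        have hfun : (fun y => |f y| ^ p / (δ y) ^ (p-1)) = fun _ => (0:ℝ) := by
          funext y
          rw [hf0, abs_zero, Real.zero_rpow hp0.ne', zero_div]
        rw [hfun] at hgx
        have h0 := hgx.unique (hasGradientAt_const x (0:ℝ))
        rw [h0, inner_zero_right]
      rw [integral_congr_ae hg0, integral_zero]
    rw [hI1, hI2, hI3, mul_zero, mul_zero, sub_zero]
  · -- the a.e. formula for inner ℝ (δ' x) (g' x)
    have hform : ∀ᵐ x ∂(volume.restrict Ω),
        (inner ℝ (δ' x) (g' x) : ℝ) =
          p * |f x| ^ (p-2) * f x * (inner ℝ (gradient f x) (δ' x) : ℝ) / δ x ^ (p-1)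
            - (p-1) * |f x| ^ p / δ x ^ p := by
      filter_upwards [hδ', hg', ae_restrict_mem hΩ.measurableSet] with x hx hgx hxΩ
      obtain ⟨hgrad, hnorm⟩ := hx
      have ha : 0 < δ x := hδpos x hxΩ
      have hb : δ x ^ (p-1) ≠ 0 := (Real.rpow_pos_of_pos ha _).ne'
      have hu : HasFDerivAt (fun y => |f y| ^ p) ((p * |f x| ^ (p-2) * f x) • fderiv ℝ f x) x :=
        (hasDerivAt_abs_rpow (f x) hp).comp_hasFDerivAt x (hfd x).hasFDerivAt
      have hδf : HasFDerivAt δ (InnerProductSpace.toDual ℝ _ (δ' x)) x := hgrad.hasFDerivAt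
      have hψt : HasDerivAt (fun t : ℝ => (t ^ (p-1))⁻¹)
          (-((p-1) * δ x ^ (p-1-1)) / (δ x ^ (p-1)) ^ 2) (δ x) :=
        (Real.hasDerivAt_rpow_const (Or.inl ha.ne')).inv hb
      have hv : HasFDerivAt (fun y => ((δ y) ^ (p-1))⁻¹)
          ((-((p-1) * δ x ^ (p-1-1)) / (δ x ^ (p-1)) ^ 2) •
            (InnerProductSpace.toDual ℝ _ (δ' x))) x :=
        hψt.comp_hasFDerivAt x hδf
      have hmul : HasFDerivAt (fun y => |f y| ^ p * (((δ y) ^ (p-1))⁻¹)) _ x := hu.mul hv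
      have heq : (fun y => |f y| ^ p / (δ y) ^ (p-1))
          = fun y => |f y| ^ p * (((δ y) ^ (p-1))⁻¹) := by
        funext y; rw [div_eq_mul_inv]
      rw [← heq] at hmul
      have hgg := hgx.unique hmul.hasGradientAt
      have hTapp : ∀ (W : EuclideanSpace ℝ (Fin (n+1)) →L[ℝ] ℝ) (v : EuclideanSpace ℝ (Fin (n+1))),
          (inner ℝ ((InnerProductSpace.toDual ℝ (EuclideanSpace ℝ (Fin (n+1)))).symm W) v : ℝ)
            = W v := by
        intro W v
        rw [← InnerProductSpace.toDual_apply_apply, LinearIsometryEquiv.apply_symm_apply]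
      have hfg : ∀ v : EuclideanSpace ℝ (Fin (n+1)),
          fderiv ℝ f x v = (inner ℝ (gradient f x) v : ℝ) := by
        intro v
        rw [← InnerProductSpace.toDual_apply_apply]
        congr 1
        exact ((InnerProductSpace.toDual ℝ (EuclideanSpace ℝ (Fin (n+1)))).apply_symm_apply
          (fderiv ℝ f x)).symm
      rw [real_inner_comm, hgg, hTapp]
      simp only [ContinuousLinearMap.add_apply, ContinuousLinearMap.coe_smul', Pi.smul_apply,
        InnerProductSpace.toDual_apply_apply, smul_eq_mul]
      rw [hfg]
      have hdd : (inner ℝ (δ' x) (δ' x) : ℝ) = 1 := by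
        rw [real_inner_self_eq_norm_mul_norm, hnorm, mul_one]
      rw [hdd]
      have e1 : δ x ^ (p-1) = δ x ^ p / δ x := by rw [Real.rpow_sub ha, Real.rpow_one]
      have e2 : δ x ^ (p-1-1) = δ x ^ p / δ x / δ x := by
        rw [Real.rpow_sub ha, Real.rpow_sub ha, Real.rpow_one]
      rw [e1, e2]
      have hap : (0:ℝ) < δ x ^ p := Real.rpow_pos_of_pos ha p
      field_simp
      ring
    -- continuity of δ on Ω
    have hδcont : ∀ x ∈ Ω, ContinuousAt δ x := by
      intro x hx
      obtain ⟨U, hU, K, hK⟩ := hδlip x hx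
      exact hK.continuousOn.continuousAt hU
    -- gradient f : continuity and compact support
    have hgradf : Continuous (gradient f) := by
      show Continuous fun x =>
        (InnerProductSpace.toDual ℝ (EuclideanSpace ℝ (Fin (n+1)))).symm (fderiv ℝ f x)
      exact (InnerProductSpace.toDual ℝ _).symm.continuous.comp (hf.continuous_fderiv (by simp))
    have hgradsupp : HasCompactSupport (gradient f) := by
      have h1 : HasCompactSupport (fderiv ℝ f) := hfc.fderiv (𝕜 := ℝ)
      exact h1.comp_left (map_zero _)
    -- integrand A
    set A : EuclideanSpace ℝ (Fin (n+1)) → ℝ := fun x => ‖gradient f x‖ ^ p with hA_def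
    have hAc : Continuous A := hgradf.norm.rpow_const (fun x => Or.inr hp0.le)
    have hAsupp : HasCompactSupport A := by
      apply hgradsupp.comp_left (g := fun v : EuclideanSpace ℝ (Fin (n+1)) => ‖v‖ ^ p)
      simp [Real.zero_rpow hp0.ne']
    have hAint : IntegrableOn A Ω := (hAc.integrable_of_hasCompactSupport hAsupp).integrableOn
    -- set S and bounds
    set S : Set (EuclideanSpace ℝ (Fin (n+1))) := tsupport f with hS_def
    have hScpt : IsCompact S := hfc
    -- integrand B
    set B : EuclideanSpace ℝ (Fin (n+1)) → ℝ := fun x => |f x| ^ p / δ x ^ p with hB_def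
    have hδΩ : ContinuousOn δ Ω := fun x hx => (hδcont x hx).continuousWithinAt
    have hBmeas : AEStronglyMeasurable B (volume.restrict Ω) := by
      have hcont : ContinuousOn B Ω := by
        apply ContinuousOn.div
        · exact (hf.continuous.abs.rpow_const (fun x => Or.inr hp0.le)).continuousOn
        · exact hδΩ.rpow_const (fun x hx => Or.inl (hδpos x hx).ne')
        · exact fun x hx => (Real.rpow_pos_of_pos (hδpos x hx) p).ne'
      exact hcont.aestronglyMeasurable hΩ.measurableSet
    -- integrand C measurability
    set C : EuclideanSpace ℝ (Fin (n+1)) → ℝ := fun x => (inner ℝ (δ' x) (g' x) : ℝ) with hC_def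
    have hCmeas : AEStronglyMeasurable C (volume.restrict Ω) := by
      set T := (InnerProductSpace.toDual ℝ (EuclideanSpace ℝ (Fin (n+1)))).symm with hT_def
      have h1 : Measurable fun x => T (fderiv ℝ δ x) :=
        T.continuous.measurable.comp (measurable_fderiv ℝ δ)
      have h2 : Measurable fun x =>
          T (fderiv ℝ (fun y => |f y| ^ p / (δ y) ^ (p-1)) x) :=
        T.continuous.measurable.comp (measurable_fderiv ℝ _)
      have hmeas : Measurable fun x => (inner ℝ (T (fderiv ℝ δ x))
          (T (fderiv ℝ (fun y => |f y| ^ p / (δ y) ^ (p-1)) x)) : ℝ) := h1.inner h2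
      apply hmeas.aestronglyMeasurable.congr
      filter_upwards [hδ', hg'] with x hx hgx
      have e1 : fderiv ℝ δ x = InnerProductSpace.toDual ℝ _ (δ' x) := hx.1.hasFDerivAt.fderiv
      have e2 : fderiv ℝ (fun y => |f y| ^ p / (δ y) ^ (p-1)) x
          = InnerProductSpace.toDual ℝ _ (g' x) := hgx.hasFDerivAt.fderiv
      rw [hC_def]
      simp only [e1, e2, hT_def, LinearIsometryEquiv.symm_apply_apply]
    -- minimum of δ on S
    obtain ⟨z, hzS, hz⟩ := hScpt.exists_isMinOn hSne
      (fun x hx => (hδcont x (hfsupp hx)).continuousWithinAt)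
    set ε := δ z with hε_def
    have hε : 0 < ε := hδpos z (hfsupp hzS)
    have hεle : ∀ x ∈ S, ε ≤ δ x := fun x hx => (isMinOn_iff.mp hz) x hx
    obtain ⟨M, hM⟩ := hfc.exists_bound_of_continuous hf.continuous
    have hM' : ∀ x, |f x| ≤ M := fun x => by rw [← Real.norm_eq_abs]; exact hM x
    have hM0 : 0 ≤ M := (abs_nonneg (f z)).trans (hM' z)
    obtain ⟨M₂, hM₂⟩ := hgradsupp.exists_bound_of_continuous hgradf
    have hM₂0 : 0 ≤ M₂ := (norm_nonneg _).trans (hM₂ z)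
    -- indicator integrability
    have hindf : ∀ c : ℝ, Integrable (S.indicator fun _ => c) (volume.restrict Ω) := by
      intro c
      have h : Integrable (S.indicator fun _ => c) volume := by
        rw [integrable_indicator_iff hScpt.measurableSet]
        exact integrableOn_const hScpt.measure_lt_top.ne
      exact h.restrict
    -- B integrable
    have hBint : Integrable B (volume.restrict Ω) := by
      apply Integrable.mono' (hindf (M ^ p / ε ^ p)) hBmeas
      filter_upwards [ae_restrict_mem hΩ.measurableSet] with x hxΩ
      have ha : 0 < δ x := hδpos x hxΩ
      by_cases hxS : x ∈ S
      · rw [Set.indicator_of_mem hxS]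
        have h1 : 0 ≤ B x := by
          have : 0 < δ x ^ p := Real.rpow_pos_of_pos ha p
          have h2 : 0 ≤ |f x| ^ p := Real.rpow_nonneg (abs_nonneg _) p
          rw [hB_def]
          positivity
        rw [Real.norm_eq_abs, abs_of_nonneg h1]
        show |f x| ^ p / δ x ^ p ≤ M ^ p / ε ^ p
        exact div_le_div₀ (by positivity)
          (Real.rpow_le_rpow (abs_nonneg _) (hM' x) hp0.le)
          (Real.rpow_pos_of_pos hε p)
          (Real.rpow_le_rpow hε.le (hεle x hxS) hp0.le)
      · rw [Set.indicator_of_notMem hxS]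
        have h0 : f x = 0 := image_eq_zero_of_notMem_tsupport hxS
        show ‖|f x| ^ p / δ x ^ p‖ ≤ 0
        rw [h0, abs_zero, Real.zero_rpow hp0.ne', zero_div, norm_zero]
    -- C integrable
    have hCint : Integrable C (volume.restrict Ω) := by
      apply Integrable.mono'
        (hindf (p * M ^ (p-1) * M₂ / ε ^ (p-1) + (p-1) * M ^ p / ε ^ p)) hCmeas
      filter_upwards [hform, hδ', ae_restrict_mem hΩ.measurableSet] with x hfx hx hxΩ
      have ha : 0 < δ x := hδpos x hxΩ
      by_cases hxS : x ∈ S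
      · rw [Set.indicator_of_mem hxS, Real.norm_eq_abs]
        show |C x| ≤ _
        rw [hC_def]
        simp only []
        rw [hfx]
        have hIb : |(inner ℝ (gradient f x) (δ' x) : ℝ)| ≤ M₂ := by
          calc |(inner ℝ (gradient f x) (δ' x) : ℝ)|
              ≤ ‖gradient f x‖ * ‖δ' x‖ := abs_real_inner_le_norm _ _
            _ = ‖gradient f x‖ := by rw [hx.2, mul_one]
            _ ≤ M₂ := hM₂ x
        have h1 : |p * |f x| ^ (p-2) * f x * (inner ℝ (gradient f x) (δ' x) : ℝ) / δ x ^ (p-1)|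
            ≤ p * M ^ (p-1) * M₂ / ε ^ (p-1) := by
          rw [abs_div, abs_of_pos (Real.rpow_pos_of_pos ha _)]
          apply div_le_div₀ (by positivity) ?_ (Real.rpow_pos_of_pos hε _)
            (Real.rpow_le_rpow hε.le (hεle x hxS) (by linarith))
          calc |p * |f x| ^ (p-2) * f x * (inner ℝ (gradient f x) (δ' x) : ℝ)|
              = p * (|f x| ^ (p-2) * |f x|) * |(inner ℝ (gradient f x) (δ' x) : ℝ)| := by
                rw [abs_mul, abs_mul, abs_mul, abs_of_pos hp0,
                  abs_of_nonneg (Real.rpow_nonneg (abs_nonneg _) _)]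
                ring
            _ = p * |f x| ^ (p-1) * |(inner ℝ (gradient f x) (δ' x) : ℝ)| := by
                rw [abs_rpow_step hp]
            _ ≤ p * M ^ (p-1) * M₂ := by
                apply mul_le_mul ?_ hIb (abs_nonneg _) (by positivity)
                exact mul_le_mul_of_nonneg_left
                  (Real.rpow_le_rpow (abs_nonneg _) (hM' x) (by linarith)) hp0.le
        have h2 : |(p-1) * |f x| ^ p / δ x ^ p| ≤ (p-1) * M ^ p / ε ^ p := by
          rw [abs_div, abs_of_pos (Real.rpow_pos_of_pos ha _), abs_mul, abs_of_pos hp1,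
            abs_of_nonneg (Real.rpow_nonneg (abs_nonneg _) _)]
          apply div_le_div₀ (by positivity) ?_ (Real.rpow_pos_of_pos hε _)
            (Real.rpow_le_rpow hε.le (hεle x hxS) hp0.le)
          exact mul_le_mul_of_nonneg_left
            (Real.rpow_le_rpow (abs_nonneg _) (hM' x) hp0.le) hp1.le
        have h3 : |p * |f x| ^ (p-2) * f x * (inner ℝ (gradient f x) (δ' x) : ℝ) / δ x ^ (p-1)
            - (p-1) * |f x| ^ p / δ x ^ p|
            ≤ |p * |f x| ^ (p-2) * f x * (inner ℝ (gradient f x) (δ' x) : ℝ) / δ x ^ (p-1)|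
              + |(p-1) * |f x| ^ p / δ x ^ p| := abs_sub _ _
        linarith
      · rw [Set.indicator_of_notMem hxS, Real.norm_eq_abs]
        show |C x| ≤ _
        rw [hC_def]
        simp only []
        rw [hfx]
        have h0 : f x = 0 := image_eq_zero_of_notMem_tsupport hxS
        have hz0 : p * |f x| ^ (p-2) * f x * (inner ℝ (gradient f x) (δ' x) : ℝ) / δ x ^ (p-1)
            - (p-1) * |f x| ^ p / δ x ^ p = 0 := by
          rw [h0, abs_zero, Real.zero_rpow hp0.ne']
          ring
        rw [hz0, abs_zero]
    -- pointwise inequality a.e.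
    have hpoint : (fun x => ((p-1)/p) ^ (p-1) * C x) ≤ᵐ[volume.restrict Ω]
        (fun x => A x - ((p-1)/p) ^ p * B x) := by
      filter_upwards [hform, hδ', ae_restrict_mem hΩ.measurableSet] with x hfx hx hxΩ
      have ha : 0 < δ x := hδpos x hxΩ
      have hIb : |(inner ℝ (gradient f x) (δ' x) : ℝ)| ≤ ‖gradient f x‖ := by
        calc |(inner ℝ (gradient f x) (δ' x) : ℝ)|
            ≤ ‖gradient f x‖ * ‖δ' x‖ := abs_real_inner_le_norm _ _
          _ = ‖gradient f x‖ := by rw [hx.2, mul_one]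
      have hkey := pointwise_scalar' (F := f x) hp ha (norm_nonneg (gradient f x)) hIb
      show ((p-1)/p) ^ (p-1) * C x ≤ A x - ((p-1)/p) ^ p * B x
      rw [hC_def, hA_def, hB_def]
      simp only []
      rw [hfx]
      exact hkey
    -- assemble
    have hCint' := hCint.const_mul (((p-1)/p) ^ (p-1))
    have hBint' := hBint.const_mul (((p-1)/p) ^ p)
    have hfinal := integral_mono_ae hCint' (hAint.sub hBint') hpoint
    have e3 : (∫ x in Ω, (A x - ((p-1)/p) ^ p * B x))
        = (∫ x in Ω, A x) - ((p-1)/p) ^ p * ∫ x in Ω, B x := by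
      simp only [integral_sub hAint hBint', integral_const_mul]
    have e4 : (∫ x in Ω, ((p-1)/p) ^ (p-1) * C x)
        = ((p-1)/p) ^ (p-1) * ∫ x in Ω, C x := integral_const_mul _ _
    simp only [Pi.sub_apply] at hfinal
    rw [e3, e4] at hfinal
    exact hfinal
end
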